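/- arXiv:1504.06006 — 2 statements merged into one kernel-verified Lean document; each statement's English description precedes it below -/
import Mathlib

section
/- Pillai's trace equals the regression slope: Let Y be an n×k real matrix and x ∈ ℝⁿ, with A = (1 | Y) of full column rank and x not a multiple of 1. Define T = Yᵀ(I − 11ᵀ/n)Y, E = Yᵀ(I − B(BᵀB)⁻¹Bᵀ)Y where B = (1 | x), and V = tr((T − E)T⁻¹). Let b̂ be the Y-coefficient vector of the least-squares regression of x on (1, Y), s = Y·b̂, and β̂ the slope of the least-squares simple regression of s on (1, x). Then V = β̂. -/
/-!
Partialling out the intercept (Frisch–Waugh–Lovell) replaces `x` by its centred version `c` and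
`Y` by its centred version, whose Gram matrix is `T`; hence `b̂ = T⁻¹ w` with `w = Yᵀ c`. The hat
matrix of `(1 | x)` is the hat matrix of `1` plus that of `c`, so `T - E = w wᵀ / ‖c‖²` has rank
one and `V = wᵀ T⁻¹ w / ‖c‖²`. The slope of `s` on `x` is `cᵀ s / ‖c‖² = cᵀ Y T⁻¹ w / ‖c‖²`, which
is the same number.
-/

open Matrix

namespace Matrix

theorem inv_fromBlocks_of_isUnit_det₁₁ {R m p : Type*} [CommRing R] [Fintype m] [DecidableEq m]
    [Fintype p] [DecidableEq p] (A : Matrix m m R) (B : Matrix m p R) (C : Matrix p m R)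
    (D : Matrix p p R) (hA : IsUnit A.det) (hS : IsUnit (D - C * A⁻¹ * B).det) :
    (fromBlocks A B C D)⁻¹ =
      fromBlocks (A⁻¹ + A⁻¹ * B * (D - C * A⁻¹ * B)⁻¹ * C * A⁻¹)
        (-(A⁻¹ * B * (D - C * A⁻¹ * B)⁻¹)) (-((D - C * A⁻¹ * B)⁻¹ * C * A⁻¹))
        (D - C * A⁻¹ * B)⁻¹ := by
  let := invertibleOfIsUnitDet A hA
  let : Invertible (D - C * ⅟A * B) := by
    rw [invOf_eq_nonsing_inv]; exact invertibleOfIsUnitDet _ hS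
  let := fromBlocks₁₁Invertible A B C D
  rw [← invOf_eq_nonsing_inv, invOf_fromBlocks₁₁_eq]
  simp only [invOf_eq_nonsing_inv]

theorem transpose_mul_fromCols {R ι m p : Type*} [Semiring R] [Fintype ι] (U : Matrix ι m R)
    (X : Matrix ι p R) :
    (fromCols U X)ᵀ * fromCols U X = fromBlocks (Uᵀ * U) (Uᵀ * X) (Xᵀ * U) (Xᵀ * X) := by
  rw [transpose_fromCols, fromRows_mul_fromCols]

theorem isUnit_det_gram_of_rank_eq {K ι n : Type*} [Field K] [LinearOrder K]
    [IsStrictOrderedRing K] [Fintype ι] [Fintype n] [DecidableEq n] {A : Matrix ι n K}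
    (h : A.rank = Fintype.card n) : IsUnit (Aᵀ * A).det := by
  rw [← isUnit_iff_isUnit_det, ← linearIndependent_cols_iff_isUnit,
    linearIndependent_iff_card_eq_finrank_span, Set.finrank, ← rank_eq_finrank_span_cols,
    rank_transpose_mul_self, h]

variable {K ι m p : Type*} [Field K] [Fintype ι] [Fintype m] [DecidableEq m]

noncomputable def hat (U : Matrix ι m K) : Matrix ι ι K := U * (Uᵀ * U)⁻¹ * Uᵀ

noncomputable def lsCoeff (U : Matrix ι m K) (y : ι → K) : m → K := (Uᵀ * U)⁻¹ *ᵥ (Uᵀ *ᵥ y)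

theorem hat_replicateCol (v : ι → K) :
    hat (replicateCol Unit v) = (v ⬝ᵥ v)⁻¹ • vecMulVec v v := by
  ext i j
  simp only [hat, transpose_replicateCol, inv_subsingleton, mul_apply, replicateRow_apply,
    replicateCol_apply, Ring.inverse_eq_inv', Finset.univ_unique, PUnit.default_eq_unit,
    diagonal_apply_eq, Finset.sum_const, Finset.card_singleton, one_smul, dotProduct, smul_apply,
    vecMulVec_apply, smul_eq_mul]
  ring

theorem transpose_mul_hat_replicateCol_mul (Y : Matrix ι p K) (v : ι → K) :
    Yᵀ * hat (replicateCol Unit v) * Y = (v ⬝ᵥ v)⁻¹ • vecMulVec (Yᵀ *ᵥ v) (Yᵀ *ᵥ v) := by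
  rw [hat_replicateCol, Matrix.mul_smul, Matrix.smul_mul, mul_vecMulVec, vecMulVec_mul,
    ← mulVec_transpose]

theorem lsCoeff_replicateCol (v y : ι → K) :
    lsCoeff (replicateCol Unit v) y () = v ⬝ᵥ y / (v ⬝ᵥ v) := by
  simp [lsCoeff, mulVec, dotProduct, div_eq_inv_mul]

theorem isUnit_det_gram_replicateCol {v : ι → K} (hv : v ⬝ᵥ v ≠ 0) :
    IsUnit ((replicateCol Unit v)ᵀ * replicateCol Unit v).det := by
  simpa using hv

variable [DecidableEq ι]

noncomputable def residualMaker (U : Matrix ι m K) : Matrix ι ι K := 1 - hat U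

theorem residualMaker_transpose (U : Matrix ι m K) : (residualMaker U)ᵀ = residualMaker U := by
  simp only [residualMaker, hat, transpose_sub, transpose_one, transpose_mul, transpose_transpose,
    transpose_nonsing_inv, Matrix.mul_assoc]

theorem residualMaker_mul (U : Matrix ι m K) (X : Matrix ι p K) :
    residualMaker U * X = X - U * (Uᵀ * U)⁻¹ * (Uᵀ * X) := by
  simp only [residualMaker, hat, Matrix.sub_mul, Matrix.one_mul, Matrix.mul_assoc]

theorem transpose_residualMaker_mul (U : Matrix ι m K) (X : Matrix ι p K) :
    (residualMaker U * X)ᵀ = Xᵀ - Xᵀ * U * (Uᵀ * U)⁻¹ * Uᵀ := by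
  simp only [residualMaker_mul, transpose_sub, transpose_mul, transpose_transpose,
    transpose_nonsing_inv, Matrix.mul_assoc]

theorem transpose_mul_residualMaker_mul (U : Matrix ι m K) (X : Matrix ι p K) :
    Xᵀ * residualMaker U * X = Xᵀ * X - Xᵀ * U * (Uᵀ * U)⁻¹ * (Uᵀ * X) := by
  simp only [residualMaker, hat, Matrix.mul_sub, Matrix.sub_mul, Matrix.mul_one, Matrix.mul_assoc]

theorem gram_residualMaker_mul {U : Matrix ι m K} (hU : IsUnit (Uᵀ * U).det) (X : Matrix ι p K) :
    (residualMaker U * X)ᵀ * (residualMaker U * X) = Xᵀ * residualMaker U * X := by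
  have hcancel : Uᵀ * (U * ((Uᵀ * U)⁻¹ * (Uᵀ * X))) = Uᵀ * X := by
    rw [← Matrix.mul_assoc, ← Matrix.mul_assoc, mul_nonsing_inv _ hU, Matrix.one_mul]
  rw [transpose_mul_residualMaker_mul, transpose_residualMaker_mul, residualMaker_mul]
  simp only [Matrix.mul_sub, Matrix.sub_mul, Matrix.mul_assoc, hcancel]
  abel

theorem residualMaker_replicateCol_mulVec (v y : ι → K) :
    residualMaker (replicateCol Unit v) *ᵥ y = y - (v ⬝ᵥ y / (v ⬝ᵥ v)) • v := by
  rw [residualMaker, hat_replicateCol, sub_mulVec, one_mulVec, smul_mulVec, vecMulVec_mulVec]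
  ext i
  simp only [Pi.sub_apply, Pi.smul_apply, MulOpposite.smul_eq_mul_unop, MulOpposite.unop_op,
    smul_eq_mul]
  ring

theorem residualMaker_replicateCol_mulVec_ne_zero {u x : ι → K} (hx : ∀ a : K, x ≠ a • u) :
    residualMaker (replicateCol Unit u) *ᵥ x ≠ 0 := by
  rw [residualMaker_replicateCol_mulVec, Ne, sub_eq_zero]
  exact hx _

variable [Fintype p] [DecidableEq p]

theorem lsCoeff_residualMaker_mul {U : Matrix ι m K} (hU : IsUnit (Uᵀ * U).det)
    (X : Matrix ι p K) (y : ι → K) :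
    lsCoeff (residualMaker U * X) y =
      (Xᵀ * residualMaker U * X)⁻¹ *ᵥ (Xᵀ *ᵥ (residualMaker U *ᵥ y)) := by
  rw [lsCoeff, gram_residualMaker_mul hU, transpose_mul, residualMaker_transpose,
    ← mulVec_mulVec]

theorem isUnit_det_gram_residualMaker_mul {U : Matrix ι m K} (hU : IsUnit (Uᵀ * U).det)
    {X : Matrix ι p K} (hA : IsUnit ((fromCols U X)ᵀ * fromCols U X).det) :
    IsUnit ((residualMaker U * X)ᵀ * (residualMaker U * X)).det := by
  let := invertibleOfIsUnitDet _ hU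
  rw [transpose_mul_fromCols, det_fromBlocks₁₁, invOf_eq_nonsing_inv,
    ← transpose_mul_residualMaker_mul, ← gram_residualMaker_mul hU] at hA
  exact isUnit_of_mul_isUnit_right hA

/-- Frisch–Waugh–Lovell theorem. -/
theorem lsCoeff_fromCols_inr {U : Matrix ι m K} (hU : IsUnit (Uᵀ * U).det) {X : Matrix ι p K}
    (hS : IsUnit ((residualMaker U * X)ᵀ * (residualMaker U * X)).det) (y : ι → K) :
    (fun j => lsCoeff (fromCols U X) y (Sum.inr j)) = lsCoeff (residualMaker U * X) y := by
  rw [gram_residualMaker_mul hU, transpose_mul_residualMaker_mul] at hS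
  funext j
  rw [lsCoeff, lsCoeff, transpose_mul_fromCols, inv_fromBlocks_of_isUnit_det₁₁ _ _ _ _ hU hS,
    transpose_fromCols, fromRows_mulVec, fromBlocks_mulVec, Sum.elim_inr,
    gram_residualMaker_mul hU, transpose_mul_residualMaker_mul, transpose_residualMaker_mul]
  set S := Xᵀ * X - Xᵀ * U * (Uᵀ * U)⁻¹ * (Uᵀ * X)
  simp only [Sum.elim_comp_inl, Sum.elim_comp_inr, Matrix.neg_mulVec, ← Matrix.mulVec_mulVec,
    Matrix.sub_mulVec, Matrix.mulVec_sub, Pi.add_apply, Pi.sub_apply, Pi.neg_apply]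
  abel

theorem hat_fromCols {U : Matrix ι m K} (hU : IsUnit (Uᵀ * U).det) {X : Matrix ι p K}
    (hS : IsUnit ((residualMaker U * X)ᵀ * (residualMaker U * X)).det) :
    hat (fromCols U X) = hat U + hat (residualMaker U * X) := by
  rw [gram_residualMaker_mul hU, transpose_mul_residualMaker_mul] at hS
  rw [hat, hat, hat, transpose_mul_fromCols, inv_fromBlocks_of_isUnit_det₁₁ _ _ _ _ hU hS,
    transpose_fromCols, fromCols_mul_fromBlocks, fromCols_mul_fromRows,
    gram_residualMaker_mul hU, transpose_mul_residualMaker_mul, transpose_residualMaker_mul,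
    residualMaker_mul]
  simp only [Matrix.mul_add, Matrix.add_mul, Matrix.mul_sub, Matrix.sub_mul, Matrix.mul_neg,
    Matrix.neg_mul, Matrix.mul_assoc]
  abel

theorem residualMaker_fromCols {U : Matrix ι m K} (hU : IsUnit (Uᵀ * U).det) {X : Matrix ι p K}
    (hS : IsUnit ((residualMaker U * X)ᵀ * (residualMaker U * X)).det) :
    residualMaker (fromCols U X) = residualMaker U - hat (residualMaker U * X) := by
  rw [residualMaker, hat_fromCols hU hS, residualMaker, sub_add_eq_sub_sub]

end Matrix

/-- main theorem: Pillai's trace `V = tr((T−E)T⁻¹)` for MANOVA of `Y` on `x`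
equals the least-squares slope `β̂` of the simple regression of the score `s = Y·b̂`
on `x`, where `b̂` are the `Y`-coefficients of the regression of `x` on `(1, Y)`. -/
theorem pillai_trace_eq_slope (n k : ℕ) (Y : Matrix (Fin n) (Fin k) ℝ) (x : Fin n → ℝ)
    (u : Fin n → ℝ) (hu : u = fun _ => (1 : ℝ))
    (A : Matrix (Fin n) (Unit ⊕ Fin k) ℝ)
    (hA : A = fromCols (Matrix.of fun i (_ : Unit) => u i) Y)
    (hrank : A.rank = k + 1)
    (hx : ∀ a : ℝ, x ≠ a • u)
    (B : Matrix (Fin n) (Unit ⊕ Unit) ℝ)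
    (hB : B = fromCols (Matrix.of fun i (_ : Unit) => u i)
      (Matrix.of fun i (_ : Unit) => x i))
    (T E : Matrix (Fin k) (Fin k) ℝ)
    (hT : T = Yᵀ * (1 - (n : ℝ)⁻¹ • vecMulVec u u) * Y)
    (hE : E = Yᵀ * (1 - B * (Bᵀ * B)⁻¹ * Bᵀ) * Y)
    (V : ℝ) (hV : V = ((T - E) * T⁻¹).trace)
    (bhat : Fin k → ℝ)
    (hbhat : bhat = fun j => ((Aᵀ * A)⁻¹ *ᵥ (Aᵀ *ᵥ x)) (Sum.inr j))
    (s : Fin n → ℝ) (hs : s = Y *ᵥ bhat)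
    (βhat : ℝ) (hβ : βhat = ((Bᵀ * B)⁻¹ *ᵥ (Bᵀ *ᵥ s)) (Sum.inr ())) :
    V = βhat := by
  change A = fromCols (replicateCol Unit u) Y at hA
  change B = fromCols (replicateCol Unit u) (replicateCol Unit x) at hB
  set M := residualMaker (replicateCol Unit u)
  set c := M *ᵥ x
  set w := Yᵀ *ᵥ c
  have huu : u ⬝ᵥ u = n := by simp [hu, dotProduct]
  have hn : (n : ℝ) ≠ 0 := by
    intro h
    obtain rfl : n = 0 := by exact_mod_cast h
    exact hx 0 (Subsingleton.elim _ _)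
  have hU := isUnit_det_gram_replicateCol (huu ▸ hn)
  have hMx : M * replicateCol Unit x = replicateCol Unit c := (replicateCol_mulVec _ _).symm
  have hSB : IsUnit ((M * replicateCol Unit x)ᵀ * (M * replicateCol Unit x)).det :=
    hMx ▸ isUnit_det_gram_replicateCol
      (dotProduct_self_eq_zero.not.mpr (residualMaker_replicateCol_mulVec_ne_zero hx))
  have hSA : IsUnit ((M * Y)ᵀ * (M * Y)).det :=
    isUnit_det_gram_residualMaker_mul hU
      (hA ▸ isUnit_det_gram_of_rank_eq (by simpa [add_comm] using hrank))
  have hT' : T = Yᵀ * M * Y := by rw [hT, ← huu, ← hat_replicateCol]; rfl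
  have hTE : T - E = (c ⬝ᵥ c)⁻¹ • vecMulVec w w := by
    rw [hT', hE, ← hat, ← residualMaker, hB, residualMaker_fromCols hU hSB, hMx, Matrix.mul_sub,
      Matrix.sub_mul, sub_sub_cancel, transpose_mul_hat_replicateCol_mul]
  have hbhat' : bhat = T⁻¹ *ᵥ w := by
    rw [hbhat, hA]
    refine (lsCoeff_fromCols_inr hU hSA x).trans ?_
    rw [lsCoeff_residualMaker_mul hU, ← hT']
  have hβ' : βhat = c ⬝ᵥ s / (c ⬝ᵥ c) := by
    rw [hβ, hB, ← lsCoeff, ← lsCoeff_replicateCol, ← hMx, ← lsCoeff_fromCols_inr hU hSB s]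
  have hcs : c ⬝ᵥ s = w ⬝ᵥ w ᵥ* T⁻¹ := by
    rw [hs, hbhat', dotProduct_mulVec, ← mulVec_transpose, dotProduct_mulVec, dotProduct_comm]
  rw [hV, hTE, Matrix.smul_mul, trace_smul, vecMulVec_mul, trace_vecMulVec, smul_eq_mul, hβ', hcs,
    div_eq_inv_mul]
end

section
/- Pillai's trace is bounded: for the single-predictor MANOVA with T = Yᵀ(I−11ᵀ/n)Y invertible and B = (1|x) with BᵀB invertible, the statistic V = tr((T−E)T⁻¹) satisfies 0 ≤ V ≤ 1. -/
/-!
The difference `P_B - P_1` of the hat matrices of `(1 | x)` and of `1` is the orthogonal projection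
onto the centred predictor `z = x - x̄ 1`, so `T - E = ν⁻¹ a aᵀ` with `a = Yᵀ z` and `ν = zᵀ z`, and
`V = ν⁻¹ t` with `t = aᵀ T⁻¹ a ≥ 0`. Testing `E ≥ 0` against `b = T⁻¹ a` gives
`0 ≤ bᵀ E b = t - ν⁻¹ t²`, which is `V (1 - V) ≥ 0` up to the factor `ν`.
-/

open Matrix

namespace Matrix

variable {m : Type*} [Fintype m]

theorem trace_smul_vecMulVec_mul_inv_mem_Icc [DecidableEq m] {E : Matrix m m ℝ}
    (hE : E.PosSemidef) {c : ℝ} (hc : 0 ≤ c) (a : m → ℝ)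
    (hT : IsUnit (E + c • vecMulVec a a).det) :
    (c • vecMulVec a a * (E + c • vecMulVec a a)⁻¹).trace ∈ Set.Icc 0 1 := by
  set T := E + c • vecMulVec a a
  set b := a ᵥ* T⁻¹
  set t := a ⬝ᵥ b
  have hb : b ᵥ* T = a := by rw [vecMul_vecMul, nonsing_inv_mul _ hT, vecMul_one]
  have htrace : (c • vecMulVec a a * T⁻¹).trace = c * t := by
    rw [smul_mul, vecMulVec_mul, trace_smul, trace_vecMulVec, smul_eq_mul]
  have ht : 0 ≤ t := by
    have hTinv : T⁻¹.PosSemidef := (hE.add (posSemidef_vecMulVec_self_star a |>.smul hc)).inv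
    simpa [t, b, dotProduct_comm a, ← dotProduct_mulVec] using hTinv.dotProduct_mulVec_nonneg a
  have hquad : 0 ≤ t - c * t ^ 2 := by
    have hEb := hE.dotProduct_mulVec_nonneg b
    rw [star_trivial] at hEb
    have hE' : E = T - c • vecMulVec a a := by simp [T]
    rw [hE', sub_mulVec, dotProduct_sub, dotProduct_mulVec, hb, smul_mulVec, vecMulVec_mulVec,
      dotProduct_smul, dotProduct_smul] at hEb
    simpa [t, dotProduct_comm b a, sq, mul_assoc] using hEb
  rw [htrace]
  constructor <;> nlinarith [mul_nonneg hc hquad]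

/-- The orthogonal projection onto the span of `w`; the zero matrix when `w = 0`. -/
noncomputable def lineProj (w : m → ℝ) : Matrix m m ℝ :=
  (w ⬝ᵥ w)⁻¹ • vecMulVec w w

theorem lineProj_one : lineProj (1 : m → ℝ) = (Fintype.card m : ℝ)⁻¹ • vecMulVec 1 1 := by
  rw [lineProj, one_dotProduct_one]

theorem transpose_lineProj (w : m → ℝ) : (lineProj w)ᵀ = lineProj w := by
  rw [lineProj, transpose_smul, transpose_vecMulVec]

theorem lineProj_mulVec_self (w : m → ℝ) : lineProj w *ᵥ w = w := by
  rcases eq_or_ne w 0 with rfl | hw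
  · simp [lineProj]
  · have hww : w ⬝ᵥ w ≠ 0 := dotProduct_self_eq_zero.not.mpr hw
    rw [lineProj, smul_mulVec, vecMulVec_mulVec, op_smul_eq_smul, smul_smul,
      inv_mul_cancel₀ hww, one_smul]

theorem lineProj_mulVec_of_dotProduct_eq_zero {w v : m → ℝ} (h : w ⬝ᵥ v = 0) :
    lineProj w *ᵥ v = 0 := by
  rw [lineProj, smul_mulVec, vecMulVec_mulVec, h, MulOpposite.op_zero, zero_smul, smul_zero]

theorem mul_lineProj_of_mulVec_eq {M : Matrix m m ℝ} {w : m → ℝ} (h : M *ᵥ w = w) :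
    M * lineProj w = lineProj w := by
  rw [lineProj, Matrix.mul_smul, mul_vecMulVec, h]

theorem transpose_mul_lineProj_mul {n : Type*} (Y : Matrix m n ℝ) (w : m → ℝ) :
    Yᵀ * lineProj w * Y = (w ⬝ᵥ w)⁻¹ • vecMulVec (Yᵀ *ᵥ w) (Yᵀ *ᵥ w) := by
  rw [lineProj, Matrix.mul_smul, Matrix.smul_mul, mul_vecMulVec, vecMulVec_mul, ← mulVec_transpose]

section hatMatrix

variable {r : Type*} [Fintype r] [DecidableEq r] (B : Matrix m r ℝ)

noncomputable def hatMatrix : Matrix m m ℝ :=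
  B * (Bᵀ * B)⁻¹ * Bᵀ

theorem transpose_hatMatrix : (hatMatrix B)ᵀ = hatMatrix B := by
  rw [hatMatrix, transpose_mul, transpose_mul, transpose_transpose, transpose_nonsing_inv,
    transpose_mul, transpose_transpose, Matrix.mul_assoc]

variable {B}

theorem hatMatrix_mul_self (h : IsUnit (Bᵀ * B).det) : hatMatrix B * B = B := by
  rw [hatMatrix, Matrix.mul_assoc, nonsing_inv_mul_cancel_right _ _ h]

theorem posSemidef_one_sub_hatMatrix [DecidableEq m] (h : IsUnit (Bᵀ * B).det) :
    (1 - hatMatrix B).PosSemidef := by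
  have hidem : hatMatrix B * hatMatrix B = hatMatrix B := by
    calc hatMatrix B * hatMatrix B = hatMatrix B * B * (Bᵀ * B)⁻¹ * Bᵀ := by
          simp only [hatMatrix, Matrix.mul_assoc]
      _ = hatMatrix B := by rw [hatMatrix_mul_self h, hatMatrix]
  have hsq : (1 - hatMatrix B)ᴴ * (1 - hatMatrix B) = 1 - hatMatrix B := by
    rw [conjTranspose_eq_transpose_of_trivial, transpose_sub, transpose_one, transpose_hatMatrix,
      Matrix.sub_mul, Matrix.mul_sub, Matrix.mul_sub, hidem, Matrix.one_mul, Matrix.mul_one,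
      Matrix.one_mul, sub_self, sub_zero]
  rw [← hsq]
  exact posSemidef_conjTranspose_mul_self _

theorem hatMatrix_eq {Q : Matrix m m ℝ} (hQ : Qᵀ = Q) (hQB : Q * B = B)
    (hPQ : hatMatrix B * Q = Q) : hatMatrix B = Q := by
  have hQP : Q * hatMatrix B = hatMatrix B := by
    rw [hatMatrix, ← Matrix.mul_assoc, ← Matrix.mul_assoc, hQB]
  rw [← hPQ, ← transpose_hatMatrix B, ← hQ, ← transpose_mul, hQP, transpose_hatMatrix]

end hatMatrix

theorem mul_fromCols_replicateCol_eq_self_iff {M : Matrix m m ℝ} {v w : m → ℝ} :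
    M * fromCols (replicateCol Unit v) (replicateCol Unit w) =
        fromCols (replicateCol Unit v) (replicateCol Unit w) ↔ M *ᵥ v = v ∧ M *ᵥ w = w := by
  rw [mul_fromCols, fromCols_ext_iff, ← replicateCol_mulVec, ← replicateCol_mulVec,
    replicateCol_inj, replicateCol_inj]

end Matrix

noncomputable def centered {m : Type*} [Fintype m] (x : m → ℝ) : m → ℝ :=
  x - ((∑ i, x i) / Fintype.card m) • 1

theorem one_dotProduct_centered {m : Type*} [Fintype m] (x : m → ℝ) :
    1 ⬝ᵥ centered x = 0 := by
  rcases isEmpty_or_nonempty m with _ | _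
  · simp
  · rw [centered, dotProduct_sub, dotProduct_smul, one_dotProduct_one, one_dotProduct,
      smul_eq_mul, div_mul_cancel₀ _ (by positivity), sub_self]

theorem hatMatrix_fromCols_one_eq {m : Type*} [Fintype m] (x : m → ℝ)
    (h : IsUnit ((fromCols (replicateCol Unit 1) (replicateCol Unit x))ᵀ *
      fromCols (replicateCol Unit (1 : m → ℝ)) (replicateCol Unit x)).det) :
    hatMatrix (fromCols (replicateCol Unit 1) (replicateCol Unit x)) =
      lineProj 1 + lineProj (centered x) := by
  set B := fromCols (replicateCol Unit (1 : m → ℝ)) (replicateCol Unit x)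
  set z := centered x
  have hx : z + ((∑ i, x i) / Fintype.card m) • 1 = x := sub_add_cancel _ _
  have h1z : 1 ⬝ᵥ z = 0 := one_dotProduct_centered x
  have hz1 : z ⬝ᵥ 1 = 0 := by rw [dotProduct_comm, h1z]
  obtain ⟨hP1, hPx⟩ := mul_fromCols_replicateCol_eq_self_iff.mp (hatMatrix_mul_self h)
  have hPz : hatMatrix B *ᵥ z = z := by
    rw [eq_sub_of_add_eq hx, mulVec_sub, mulVec_smul, hP1, hPx]
  have hQ1 : (lineProj 1 + lineProj z) *ᵥ 1 = 1 := by
    rw [add_mulVec, lineProj_mulVec_self, lineProj_mulVec_of_dotProduct_eq_zero hz1, add_zero]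
  have hQz : (lineProj 1 + lineProj z) *ᵥ z = z := by
    rw [add_mulVec, lineProj_mulVec_self, lineProj_mulVec_of_dotProduct_eq_zero h1z, zero_add]
  have hQx : (lineProj 1 + lineProj z) *ᵥ x = x := by
    rw [← hx, mulVec_add, mulVec_smul, hQ1, hQz]
  refine hatMatrix_eq ?_ (mul_fromCols_replicateCol_eq_self_iff.mpr ⟨hQ1, hQx⟩) ?_
  · rw [transpose_add, transpose_lineProj, transpose_lineProj]
  · rw [Matrix.mul_add, mul_lineProj_of_mulVec_eq hP1, mul_lineProj_of_mulVec_eq hPz]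

/-- Pillai's trace with a single predictor is bounded: `0 ≤ V ≤ 1`. -/
theorem pillai_trace_bounded (n k : ℕ) (Y : Matrix (Fin n) (Fin k) ℝ) (x : Fin n → ℝ)
    (u : Fin n → ℝ) (hu : u = fun _ => (1 : ℝ))
    (B : Matrix (Fin n) (Unit ⊕ Unit) ℝ)
    (hB : B = fromCols (Matrix.of fun i (_ : Unit) => u i)
      (Matrix.of fun i (_ : Unit) => x i))
    (hBinv : IsUnit (Bᵀ * B).det)
    (T E : Matrix (Fin k) (Fin k) ℝ)
    (hT : T = Yᵀ * (1 - (n : ℝ)⁻¹ • vecMulVec u u) * Y)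
    (hTinv : IsUnit T.det)
    (hE : E = Yᵀ * (1 - B * (Bᵀ * B)⁻¹ * Bᵀ) * Y)
    (V : ℝ) (hV : V = ((T - E) * T⁻¹).trace) :
    0 ≤ V ∧ V ≤ 1 := by
  obtain rfl : u = 1 := hu
  change E = Yᵀ * (1 - hatMatrix B) * Y at hE
  set z := centered x
  set a := Yᵀ *ᵥ z
  have hP : hatMatrix B = lineProj 1 + lineProj z := by
    obtain rfl : B = fromCols (replicateCol Unit 1) (replicateCol Unit x) := hB
    exact hatMatrix_fromCols_one_eq x hBinv
  have hE_psd : E.PosSemidef := by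
    simpa [hE, conjTranspose_eq_transpose_of_trivial] using
      (posSemidef_one_sub_hatMatrix hBinv).conjTranspose_mul_mul_same Y
  have hTE : T - E = (z ⬝ᵥ z)⁻¹ • vecMulVec a a := by
    have hcentre : (n : ℝ)⁻¹ • vecMulVec 1 1 = lineProj (1 : Fin n → ℝ) := by
      rw [lineProj_one, Fintype.card_fin]
    rw [hT, hE, ← Matrix.sub_mul, ← Matrix.mul_sub, sub_sub_sub_cancel_left, hcentre, hP,
      add_sub_cancel_left, transpose_mul_lineProj_mul]
  have hT' : T = E + (z ⬝ᵥ z)⁻¹ • vecMulVec a a := by rw [← hTE, add_sub_cancel]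
  rw [hT'] at hTinv
  rw [hV, hTE, hT']
  exact trace_smul_vecMulVec_mul_inv_mem_Icc hE_psd
    (inv_nonneg.mpr (by simpa using dotProduct_star_self_nonneg z)) a hTinv
end
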